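/- arXiv:2002.04578 — 3 statements merged into one kernel-verified Lean document; each statement's English description precedes it below -/
import Mathlib

section
/- If m is a greatest monomial of a polynomial f in p variables over ℝ, then for any translation vector P ∈ ℝ^p, m is also a greatest monomial of T_{−P}(f). More generally, the set of greatest monomials of f equals the set of greatest monomials of T_{−P}(f). -/
open MvPolynomial

/-- Translation of a polynomial: substitution `X i ↦ X i + C (P i)`. -/
noncomputable def T {p : ℕ} (P : Fin p → ℝ) :
    MvPolynomial (Fin p) ℝ →ₐ[ℝ] MvPolynomial (Fin p) ℝ :=
  aeval (fun i => X i + C (P i))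

/-- `d` is a greatest monomial of `f`: its coefficient is nonzero and no other
monomial of `f` with nonzero coefficient is componentwise ≥ `d`. -/
def GreatestMonomial {p : ℕ} (f : MvPolynomial (Fin p) ℝ) (d : Fin p →₀ ℕ) : Prop :=
  coeff d f ≠ 0 ∧ ∀ e : Fin p →₀ ℕ, e ≠ d → d ≤ e → coeff e f = 0

/-! Translation `X i ↦ X i + a i` sends `X^d` to `X^d` plus terms with exponents strictly below
`d` componentwise, so the coefficient of `X^e` in the image of `f` only involves the coefficients
of `f` at exponents `≥ e`. Above a greatest monomial `d` these vanish except at `d` itself, so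
translation leaves every coefficient at an exponent `≥ d` unchanged; the converse direction
follows because `T P` inverts `T (-P)`. -/

namespace MvPolynomial

variable {σ R : Type*} [CommSemiring R]

def IsMonicAt (d : σ →₀ ℕ) (q : MvPolynomial σ R) : Prop :=
  (∀ e ∈ q.support, e ≤ d) ∧ coeff d q = 1

theorem isMonicAt_one : IsMonicAt 0 (1 : MvPolynomial σ R) := by
  classical
  refine ⟨fun e he => ?_, coeff_zero_one⟩
  rw [mem_support_iff, coeff_one] at he
  obtain rfl : 0 = e := by_contra fun h => he (if_neg h)
  exact le_rfl

theorem isMonicAt_X_add_C (i : σ) (r : R) :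
    IsMonicAt (Finsupp.single i 1) (X i + C r : MvPolynomial σ R) := by
  classical
  have hne : (0 : σ →₀ ℕ) ≠ Finsupp.single i 1 :=
    (Finsupp.single_ne_zero.mpr one_ne_zero).symm
  refine ⟨fun e he => ?_, by simp [coeff_X, coeff_C, hne]⟩
  rw [mem_support_iff, coeff_add, coeff_X, coeff_C] at he
  by_cases h : Finsupp.single i 1 = e
  · exact h.ge
  · by_cases h0 : (0 : σ →₀ ℕ) = e
    · exact h0 ▸ zero_le
    · simp [h, h0] at he

theorem IsMonicAt.mul {u v : σ →₀ ℕ} {g h : MvPolynomial σ R}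
    (hg : IsMonicAt u g) (hh : IsMonicAt v h) : IsMonicAt (u + v) (g * h) := by
  classical
  refine ⟨fun e he => ?_, ?_⟩
  · obtain ⟨a, ha, b, hb, rfl⟩ := Finset.mem_add.mp (support_mul g h he)
    exact add_le_add (hg.1 a ha) (hh.1 b hb)
  · rw [coeff_mul, Finset.sum_eq_single (u, v), hg.2, hh.2, one_mul]
    · rintro ⟨a, b⟩ hab hne
      by_contra hprod
      have ha := hg.1 a (mem_support_iff.mpr (left_ne_zero_of_mul hprod))
      have hb := hh.1 b (mem_support_iff.mpr (right_ne_zero_of_mul hprod))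
      obtain ⟨rfl, rfl⟩ := (add_eq_add_iff_eq_and_eq ha hb).mp
        (Finset.HasAntidiagonal.mem_antidiagonal.mp hab)
      exact hne rfl
    · simp

theorem IsMonicAt.pow {u : σ →₀ ℕ} {g : MvPolynomial σ R} (hg : IsMonicAt u g) (n : ℕ) :
    IsMonicAt (n • u) (g ^ n) := by
  induction n with
  | zero => simpa using isMonicAt_one
  | succ n ih => simpa [succ_nsmul, pow_succ] using ih.mul hg

theorem IsMonicAt.prod {ι : Type*} (s : Finset ι) {u : ι → σ →₀ ℕ}
    {g : ι → MvPolynomial σ R} (hg : ∀ i ∈ s, IsMonicAt (u i) (g i)) :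
    IsMonicAt (∑ i ∈ s, u i) (∏ i ∈ s, g i) := by
  classical
  induction s using Finset.induction_on with
  | empty => simpa using isMonicAt_one
  | insert i s hi ih =>
    rw [Finset.sum_insert hi, Finset.prod_insert hi]
    exact (hg i (Finset.mem_insert_self i s)).mul
      (ih fun j hj => hg j (Finset.mem_insert_of_mem hj))

theorem isMonicAt_aeval_monomial {g : σ → MvPolynomial σ R}
    (hg : ∀ i, IsMonicAt (Finsupp.single i 1) (g i)) (d : σ →₀ ℕ) :
    IsMonicAt d (aeval g (monomial d (1 : R))) := by
  rw [aeval_monomial, map_one, one_mul, Finsupp.prod]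
  convert IsMonicAt.prod d.support fun i _ => (hg i).pow (d i)
  simp only [Finsupp.smul_single_one]
  exact (Finsupp.sum_single d).symm

theorem coeff_aeval_eq_of_forall_lt {g : σ → MvPolynomial σ R}
    (hg : ∀ i, IsMonicAt (Finsupp.single i 1) (g i)) {f : MvPolynomial σ R} {e : σ →₀ ℕ}
    (hf : ∀ d, e < d → coeff d f = 0) : coeff e (aeval g f) = coeff e f := by
  have hmonomial : ∀ d, coeff e (aeval g (monomial d (coeff d f))) =
      coeff d f * coeff e (aeval g (monomial d (1 : R))) := fun d => by
    conv_lhs => rw [← mul_one (coeff d f), ← smul_eq_mul, ← smul_monomial]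
    rw [map_smul, coeff_smul, smul_eq_mul]
  conv_lhs => rw [f.as_sum]
  rw [map_sum, coeff_sum, Finset.sum_eq_single e]
  · rw [hmonomial, (isMonicAt_aeval_monomial hg e).2, mul_one]
  · intro d _ hde
    rw [hmonomial]
    by_cases hle : e ≤ d
    · rw [hf d (lt_of_le_of_ne hle (Ne.symm hde)), zero_mul]
    · have hzero := notMem_support_iff.mp (mt ((isMonicAt_aeval_monomial hg d).1 e) hle)
      rw [hzero, mul_zero]
  · intro he
    rw [hmonomial, notMem_support_iff.mp he, zero_mul]

end MvPolynomial

theorem T_apply_T_neg {p : ℕ} (P : Fin p → ℝ) (f : MvPolynomial (Fin p) ℝ) :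
    T P (T (-P) f) = f := by
  suffices (T P).comp (T (-P)) = AlgHom.id ℝ _ from DFunLike.congr_fun this f
  refine algHom_ext fun i => ?_
  simp [T]

theorem GreatestMonomial.aeval {p : ℕ} {f : MvPolynomial (Fin p) ℝ} {d : Fin p →₀ ℕ}
    {g : Fin p → MvPolynomial (Fin p) ℝ} (hg : ∀ i, IsMonicAt (Finsupp.single i 1) (g i))
    (hf : GreatestMonomial f d) : GreatestMonomial (MvPolynomial.aeval g f) d := by
  have hcoeff : ∀ e, d ≤ e → coeff e (MvPolynomial.aeval g f) = coeff e f := fun e hde =>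
    coeff_aeval_eq_of_forall_lt hg fun d' hed' =>
      hf.2 d' (hde.trans_lt hed').ne' (hde.trans hed'.le)
  refine ⟨?_, fun e hne hde => (hcoeff e hde).trans (hf.2 e hne hde)⟩
  rw [hcoeff d le_rfl]
  exact hf.1

theorem GreatestMonomial.translate {p : ℕ} {f : MvPolynomial (Fin p) ℝ} {d : Fin p →₀ ℕ}
    (hf : GreatestMonomial f d) (P : Fin p → ℝ) : GreatestMonomial (T P f) d :=
  hf.aeval fun i => isMonicAt_X_add_C i (P i)

/-- The set of greatest monomials of `f` equals the set of greatest monomials of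
`T (-P) f`; in particular any greatest monomial of `f` is a greatest monomial of
the translated polynomial. -/
theorem greatestMonomial_translate {p : ℕ} (f : MvPolynomial (Fin p) ℝ)
    (P : Fin p → ℝ) :
    ∀ d : Fin p →₀ ℕ, GreatestMonomial f d ↔ GreatestMonomial (T (-P) f) d :=
  fun _ => ⟨fun h => h.translate (-P), fun h => T_apply_T_neg P f ▸ h.translate P⟩
end

section
/- Let L_{X,y}(f) = g(SSR_{X,y}(f)) + PEN applied to the coefficients of f on a fixed set G ⊆ ℕ^p of exponent vectors, where G consists only of maximal elements of the model's support (no element of the model's allowed exponent set is strictly componentwise greater than an element of G). Then for any polynomial f supported in the model and any P ∈ ℝ^p, L_{X,y}(f) = L_{T_P(X), y}(T_{−P}(f)). -/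
/-!
Translating the design points by `P` and substituting `X i ↦ X i - P i` in `f` leave every fitted
value unchanged, so the residuals and hence `SSR` agree. The substitution `X i ↦ X i + c i` sends
the monomial `X^e` to `X^e` plus monomials whose exponents lie componentwise below `e`, so it can
only change the coefficient at `d` by contributions from exponents `e > d` in the support of `f`;
there are none when `d` is maximal in the model.
-/

open MvPolynomial

/-- Sum of squared residuals. -/
noncomputable def SSR {n p : ℕ} (X : Fin n → Fin p → ℝ) (y : Fin n → ℝ)
    (f : MvPolynomial (Fin p) ℝ) : ℝ :=
  ∑ j, (y j - eval (X j) f) ^ 2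

namespace MvPolynomial

variable {σ R : Type*} [CommSemiring R]

def HasTopMonomial (e : σ →₀ ℕ) (p : MvPolynomial σ R) : Prop :=
  (∀ d ∈ p.support, d ≤ e) ∧ coeff e p = 1

theorem hasTopMonomial_one : HasTopMonomial 0 (1 : MvPolynomial σ R) := by
  classical
  refine ⟨fun d hd => ?_, coeff_zero_one⟩
  contrapose! hd
  rw [notMem_support_iff, coeff_one, if_neg]
  rintro rfl
  exact hd le_rfl

theorem HasTopMonomial.mul {a b : σ →₀ ℕ} {p q : MvPolynomial σ R}
    (hp : HasTopMonomial a p) (hq : HasTopMonomial b q) :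
    HasTopMonomial (a + b) (p * q) := by
  classical
  refine ⟨fun d hd => ?_, ?_⟩
  · obtain ⟨d₁, hd₁, d₂, hd₂, rfl⟩ := Finset.mem_add.mp (support_mul p q hd)
    exact add_le_add (hp.1 d₁ hd₁) (hq.1 d₂ hd₂)
  · rw [coeff_mul, Finset.sum_eq_single (a, b), hp.2, hq.2, one_mul]
    · rintro ⟨d₁, d₂⟩ hmem hne
      by_contra h
      have h₁ := hp.1 d₁ (mem_support_iff.mpr (left_ne_zero_of_mul h))
      have h₂ := hq.1 d₂ (mem_support_iff.mpr (right_ne_zero_of_mul h))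
      exact hne (Prod.ext_iff.mpr ((add_eq_add_iff_eq_and_eq h₁ h₂).mp
        (Finset.HasAntidiagonal.mem_antidiagonal.mp hmem)))
    · simp

theorem HasTopMonomial.pow {a : σ →₀ ℕ} {p : MvPolynomial σ R}
    (hp : HasTopMonomial a p) (n : ℕ) : HasTopMonomial (n • a) (p ^ n) := by
  induction n with
  | zero => simpa using hasTopMonomial_one
  | succ n ih =>
    rw [pow_succ, succ_nsmul]
    exact ih.mul hp

theorem hasTopMonomial_X_add_C (i : σ) (c : R) :
    HasTopMonomial (Finsupp.single i 1) (X i + C c) := by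
  classical
  have hne : (0 : σ →₀ ℕ) ≠ Finsupp.single i 1 :=
    (Finsupp.single_ne_zero.mpr one_ne_zero).symm
  refine ⟨fun d hd => ?_, by simp [coeff_X, coeff_C, hne]⟩
  contrapose! hd
  have h₁ : Finsupp.single i 1 ≠ d := by rintro rfl; exact hd le_rfl
  have h₀ : (0 : σ →₀ ℕ) ≠ d := by rintro rfl; exact hd (zero_le ..)
  rw [notMem_support_iff, coeff_add, coeff_X, coeff_C, if_neg h₁, if_neg h₀, add_zero]

theorem hasTopMonomial_map_monomial {φ : MvPolynomial σ R →ₐ[R] MvPolynomial σ R}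
    (hφ : ∀ i, HasTopMonomial (Finsupp.single i 1) (φ (X i))) (e : σ →₀ ℕ) :
    HasTopMonomial e (φ (monomial e 1)) := by
  induction e using Finsupp.induction with
  | zero => simpa using hasTopMonomial_one
  | single_add i n e _ _ ih =>
    rw [monomial_single_add, map_mul, map_pow]
    simpa using (hφ i).pow n |>.mul ih

theorem coeff_map_of_maximal {φ : MvPolynomial σ R →ₐ[R] MvPolynomial σ R}
    (hφ : ∀ i, HasTopMonomial (Finsupp.single i 1) (φ (X i))) (f : MvPolynomial σ R)
    {d : σ →₀ ℕ} (hd : ∀ e ∈ f.support, d ≤ e → e = d) :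
    coeff d (φ f) = coeff d f := by
  have hφ_monomial (e : σ →₀ ℕ) (c : R) : φ (monomial e c) = c • φ (monomial e 1) := by
    rw [← map_smul, smul_monomial, smul_eq_mul, mul_one]
  conv_lhs => rw [f.as_sum]
  rw [map_sum, coeff_sum, Finset.sum_eq_single d]
  · rw [hφ_monomial, coeff_smul, (hasTopMonomial_map_monomial hφ d).2, smul_eq_mul, mul_one]
  · intro e he hed
    rw [hφ_monomial, coeff_smul, smul_eq_mul]
    by_contra h
    exact hed (hd e he ((hasTopMonomial_map_monomial hφ e).1 d
      (mem_support_iff.mpr (right_ne_zero_of_mul h))))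
  · intro hd
    rw [notMem_support_iff.mp hd, monomial_zero, map_zero, coeff_zero]

end MvPolynomial

theorem eval_T {p : ℕ} (Q v : Fin p → ℝ) (f : MvPolynomial (Fin p) ℝ) :
    eval v (T Q f) = eval (v + Q) f := by
  change aeval v (aeval _ f) = aeval (v + Q) f
  rw [comp_aeval_apply]
  congr 1
  ext i
  simp

theorem hasTopMonomial_T_X {p : ℕ} (Q : Fin p → ℝ) (i : Fin p) :
    HasTopMonomial (Finsupp.single i 1) (T Q (X i)) := by
  rw [T, aeval_X]
  exact hasTopMonomial_X_add_C i (Q i)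

theorem penalized_loss_translation_invariant_general {n p : ℕ}
    (X : Fin n → Fin p → ℝ) (y : Fin n → ℝ)
    (g : ℝ → ℝ) (I : Set (Fin p →₀ ℕ)) (G : Set (Fin p →₀ ℕ))
    (PEN : (G → ℝ) → ℝ)
    (hGmax : ∀ d ∈ G, ∀ e ∈ I, d ≤ e → e = d)
    (f : MvPolynomial (Fin p) ℝ) (hf : ↑f.support ⊆ I)
    (P : Fin p → ℝ) :
    g (SSR X y f) + PEN (fun d => coeff d.1 f) =
      g (SSR (fun j => X j + P) y (T (-P) f)) +
        PEN (fun d => coeff d.1 (T (-P) f)) := by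
  have hSSR : SSR (fun j => X j + P) y (T (-P) f) = SSR X y f := by
    simp only [SSR, eval_T, add_neg_cancel_right]
  have hcoeff : (fun d : G => coeff d.1 (T (-P) f)) = fun d => coeff d.1 f :=
    funext fun d => coeff_map_of_maximal (hasTopMonomial_T_X (-P)) f
      fun e he hde => hGmax d d.2 e (hf he) hde
  rw [hSSR, hcoeff]

/-- Invariance of the penalized loss `L_{X,y}(f) = g(SSR_{X,y}(f)) + PEN((coeff_d f)_{d∈G})`
under translation, when `G` consists only of maximal elements of the model support `I`
and `f` is supported in `I`. -/
theorem penalized_loss_translation_invariant {n p : ℕ}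
    (X : Fin n → Fin p → ℝ) (y : Fin n → ℝ)
    (g : ℝ → ℝ) (I : Set (Fin p →₀ ℕ)) (G : Set (Fin p →₀ ℕ))
    (PEN : (G → ℝ) → ℝ)
    (hGI : G ⊆ I)
    (hGmax : ∀ d ∈ G, ∀ e ∈ I, d ≤ e → e = d)
    (f : MvPolynomial (Fin p) ℝ) (hf : ↑f.support ⊆ I)
    (P : Fin p → ℝ) :
    g (SSR X y f) + PEN (fun d => coeff d.1 f) =
      g (SSR (fun j => X j + P) y (T (-P) f)) +
        PEN (fun d => coeff d.1 (T (-P) f)) :=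
  penalized_loss_translation_invariant_general X y g I G PEN hGmax f hf P
end

section
/- If a set G of exponent vectors contains an element d that is not maximal in the model support I (i.e., there exists e ∈ I, e ≠ d, with e ≥ d componentwise), then the coefficient at d is in general not preserved by translation: there exist a polynomial f supported in I and a vector P ∈ ℝ^p with coeff_d(T_{−P} f) ≠ coeff_d(f). -/
open MvPolynomial

open Finset
variable {p : ℕ}

lemma coeff_X_add_one_pow' (i : Fin p) (n : ℕ) (m : Fin p →₀ ℕ) :
    coeff m ((X i + 1 : MvPolynomial (Fin p) ℝ) ^ n) =
      if m = Finsupp.single i (m i) then (n.choose (m i) : ℝ) else 0 := by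
  rw [add_pow]
  simp only [one_pow, mul_one]
  rw [coeff_sum]
  have key : ∀ k ∈ range (n + 1),
      coeff m ((X i : MvPolynomial (Fin p) ℝ) ^ k * (n.choose k : MvPolynomial (Fin p) ℝ)) =
        if (m = Finsupp.single i (m i) ∧ k = m i) then (n.choose (m i) : ℝ) else 0 := by
    intro k _
    rw [mul_comm, ← C_eq_coe_nat, coeff_C_mul, coeff_X_pow]
    split_ifs with h1 h2 h2
    · simp [h2.2]
    · exfalso; apply h2
      constructor
      · rw [← h1, Finsupp.single_eq_same]
      · have := congrArg (fun g => g i) h1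
        simp only [Finsupp.single_eq_same] at this
        omega
    · exfalso
      obtain ⟨hm, hk⟩ := h2
      exact h1 (by rw [hk, ← hm])
    · ring
  rw [Finset.sum_congr rfl key]
  by_cases hm : m = Finsupp.single i (m i)
  · rw [if_pos hm]
    by_cases hmi : m i ≤ n
    · rw [Finset.sum_eq_single (m i)]
      · rw [if_pos ⟨hm, rfl⟩]
      · intro k _ hk
        rw [if_neg (fun h => hk h.2)]
      · intro h
        exfalso; apply h; simpa using Nat.lt_succ_of_le hmi
    · push_neg at hmi
      rw [Finset.sum_eq_zero, Nat.choose_eq_zero_of_lt hmi, Nat.cast_zero]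
      intro k hk
      rw [if_neg]
      rintro ⟨-, rfl⟩
      simp only [mem_range] at hk; omega
  · rw [if_neg hm, Finset.sum_eq_zero]
    intro k _
    rw [if_neg (fun h => hm h.1)]

lemma coeff_X_add_one_pow_nonneg (i : Fin p) (n : ℕ) (m : Fin p →₀ ℕ) :
    0 ≤ coeff m ((X i + 1 : MvPolynomial (Fin p) ℝ) ^ n) := by
  rw [coeff_X_add_one_pow']
  split_ifs <;> positivity

/-- If `d` is not maximal in the model support `I` (some `e ∈ I`, `e ≠ d`,
`d ≤ e` componentwise), then the coefficient at `d` is not preserved by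
translation in general: there are `f` supported in `I` and `P` with
`coeff d (T (-P) f) ≠ coeff d f`. -/
theorem coeff_not_preserved_of_not_maximal {p : ℕ}
    (I : Set (Fin p →₀ ℕ)) (d e : Fin p →₀ ℕ)
    (heI : e ∈ I) (hne : e ≠ d) (hle : d ≤ e) :
    ∃ (f : MvPolynomial (Fin p) ℝ) (P : Fin p → ℝ),
      ↑f.support ⊆ I ∧ coeff d (T (-P) f) ≠ coeff d f := by

  classical
  refine ⟨monomial e (1 : ℝ), fun _ => -1, ?_, ?_⟩
  · rw [support_monomial, if_neg one_ne_zero]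
    simpa using heI
  have hcd : coeff d (monomial e (1 : ℝ)) = 0 := by
    rw [coeff_monomial, if_neg hne]
  rw [hcd]
  have hT : T (-(fun _ => (-1 : ℝ))) (monomial e (1 : ℝ)) =
      ∏ i ∈ e.support, (X i + 1 : MvPolynomial (Fin p) ℝ) ^ e i := by
    rw [T, aeval_monomial, map_one, one_mul]
    simp only [Pi.neg_apply, neg_neg, map_one]
    rfl
  rw [hT]
  -- compute the coefficient via power series
  set g : Fin p → MvPolynomial (Fin p) ℝ := fun i => (X i + 1) ^ e i with hg
  have hcoeff : coeff d (∏ i ∈ e.support, g i) =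
      ∑ l ∈ Finset.finsuppAntidiag e.support d,
        ∏ i ∈ e.support, coeff (l i) (g i) := by
    rw [← MvPolynomial.coeff_coe, ← coeToMvPowerSeries.ringHom_apply, map_prod,
      MvPowerSeries.coeff_prod]
    simp only [coeToMvPowerSeries.ringHom_apply, MvPolynomial.coeff_coe]
  have hsupp : d.support ⊆ e.support := by
    intro j hj
    rw [Finsupp.mem_support_iff] at hj ⊢
    intro h0
    exact hj (Nat.le_antisymm (h0 ▸ hle j) (Nat.zero_le _))
  -- the distinguished element of the antidiagonal
  set l₀ : Fin p →₀ (Fin p →₀ ℕ) :=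
    ⟨d.support, fun i => Finsupp.single i (d i), by
      intro i
      rw [Finsupp.mem_support_iff]
      simp only [ne_eq, Finsupp.single_eq_zero]⟩ with hl₀
  have hl₀mem : l₀ ∈ Finset.finsuppAntidiag e.support d := by
    rw [Finset.mem_finsuppAntidiag]
    constructor
    · ext j
      rw [Finset.sum_apply']
      rw [Finset.sum_eq_single j]
      · by_cases hj : j ∈ d.support
        · simp [hl₀]
        · simp only [hl₀, Finsupp.coe_mk, Finsupp.single_eq_same]
      · intro k _ hk
        simp [hl₀, Finsupp.single_apply, hk]
      · intro hj
        have : d j = 0 := by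
          by_contra h0
          exact hj (hsupp (Finsupp.mem_support_iff.mpr h0))
        simp [hl₀, this]
    · exact hsupp
  have hterm : ∀ i ∈ e.support, coeff (l₀ i) (g i) = ((e i).choose (d i) : ℝ) := by
    intro i _
    have : l₀ i = Finsupp.single i (d i) := rfl
    rw [this, hg, coeff_X_add_one_pow', if_pos (by rw [Finsupp.single_eq_same]),
      Finsupp.single_eq_same]
  have hpos : 0 < ∑ l ∈ Finset.finsuppAntidiag e.support d,
      ∏ i ∈ e.support, coeff (l i) (g i) := by
    have h1 : 0 < ∏ i ∈ e.support, coeff (l₀ i) (g i) := by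
      rw [Finset.prod_congr rfl hterm]
      apply Finset.prod_pos
      intro i _
      exact_mod_cast Nat.choose_pos (hle i)
    refine lt_of_lt_of_le h1
      (Finset.single_le_sum (f := fun l => ∏ i ∈ e.support, coeff (l i) (g i)) ?_ hl₀mem)
    intro l _
    apply Finset.prod_nonneg
    intro i _
    exact coeff_X_add_one_pow_nonneg i (e i) (l i)
  rw [hcoeff]
  exact ne_of_gt hpos
end
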